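/- For all a, b ∈ ℝ, ∫_{−∞}^{∞} x Φ(a + bx) φ(x) dx = (b / √(1 + b²)) φ(a / √(1 + b²)), where φ and Φ are the standard normal PDF and CDF. -/

import Mathlib

/-!
Since `φ' = -x φ`, integration by parts gives Stein's identity `∫ x u(x) φ(x) dx = ∫ u'(x) φ(x) dx`
for bounded `u` with bounded derivative. For `u = Φ(a + b ·)` it turns the integral into
`b ∫ φ(a + b x) φ(x) dx`, and completing the square in the exponent shows that this last integral
equals `φ(a / s) / s` with `s = √(1 + b²)`.
-/

open MeasureTheory Real

/-- Standard normal probability density function. -/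
noncomputable def stdPdf (x : ℝ) : ℝ := (Real.sqrt (2 * π))⁻¹ * Real.exp (-x ^ 2 / 2)

/-- Standard normal cumulative distribution function. -/
noncomputable def stdCdf (x : ℝ) : ℝ := ∫ t in Set.Iic x, stdPdf t

theorem hasDerivAt_integral_Iic {E : Type*} [NormedAddCommGroup E] [NormedSpace ℝ E]
    [CompleteSpace E] {f : ℝ → E} (hf : Continuous f) (hfi : Integrable f) (x : ℝ) :
    HasDerivAt (fun y => ∫ t in Set.Iic y, f t) (f x) x := by
  have h_split : (fun y => ∫ t in Set.Iic y, f t) =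
      fun y => (∫ t in Set.Iic 0, f t) + ∫ t in (0)..y, f t := funext fun y => by
    rw [← intervalIntegral.integral_Iic_sub_Iic hfi.integrableOn hfi.integrableOn]
    abel
  rw [h_split]
  exact (intervalIntegral.integral_hasDerivAt_right hfi.intervalIntegrable
    (hf.stronglyMeasurableAtFilter _ _) hf.continuousAt).const_add _

theorem stdPdf_eq_gaussianPDFReal : stdPdf = ProbabilityTheory.gaussianPDFReal 0 1 := by
  ext x
  simp [stdPdf, ProbabilityTheory.gaussianPDFReal]

theorem stdPdf_nonneg (x : ℝ) : 0 ≤ stdPdf x := by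
  unfold stdPdf; positivity

theorem continuous_stdPdf : Continuous stdPdf := by
  unfold stdPdf; fun_prop

theorem integrable_stdPdf : Integrable stdPdf :=
  stdPdf_eq_gaussianPDFReal ▸ ProbabilityTheory.integrable_gaussianPDFReal 0 1

theorem integral_stdPdf : ∫ x, stdPdf x = 1 :=
  stdPdf_eq_gaussianPDFReal ▸ ProbabilityTheory.integral_gaussianPDFReal_eq_one 0 one_ne_zero

theorem stdPdf_le_stdPdf_zero (x : ℝ) : stdPdf x ≤ stdPdf 0 := by
  unfold stdPdf
  exact mul_le_mul_of_nonneg_left (exp_le_exp.2 (by nlinarith [sq_nonneg x])) (by positivity)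

theorem integrable_id_mul_stdPdf : Integrable fun x => x * stdPdf x := by
  refine ((integrable_mul_exp_neg_mul_sq (by norm_num : (0:ℝ) < 1 / 2)).const_mul
    (Real.sqrt (2 * π))⁻¹).congr (Filter.Eventually.of_forall fun x => ?_)
  simp only [stdPdf]
  ring_nf

theorem hasDerivAt_stdPdf (x : ℝ) : HasDerivAt stdPdf (-(x * stdPdf x)) x := by
  have h : HasDerivAt (fun y => -y ^ 2 / 2) (-x) x :=
    ((hasDerivAt_pow 2 x).neg.div_const 2).congr_deriv (by ring)
  exact (h.exp.const_mul _).congr_deriv (by simp only [stdPdf]; ring)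

theorem hasDerivAt_stdCdf (x : ℝ) : HasDerivAt stdCdf (stdPdf x) x :=
  hasDerivAt_integral_Iic continuous_stdPdf integrable_stdPdf x

theorem stdCdf_nonneg (x : ℝ) : 0 ≤ stdCdf x :=
  setIntegral_nonneg measurableSet_Iic fun t _ => stdPdf_nonneg t

theorem stdCdf_le_one (x : ℝ) : stdCdf x ≤ 1 :=
  integral_stdPdf ▸ setIntegral_le_integral integrable_stdPdf
    (Filter.Eventually.of_forall stdPdf_nonneg)

theorem abs_stdCdf_le_one (x : ℝ) : |stdCdf x| ≤ 1 :=
  abs_le.2 ⟨by linarith [stdCdf_nonneg x], stdCdf_le_one x⟩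

theorem hasDerivAt_stdCdf_add_mul (a b x : ℝ) :
    HasDerivAt (fun y => stdCdf (a + b * y)) (b * stdPdf (a + b * x)) x := by
  have h : HasDerivAt (fun y => a + b * y) b x := by
    simpa using ((hasDerivAt_id x).const_mul b).const_add a
  exact ((hasDerivAt_stdCdf (a + b * x)).comp x h).congr_deriv (mul_comm _ _)

theorem integral_id_mul_mul_stdPdf {u u' : ℝ → ℝ} (hu : ∀ x, HasDerivAt u (u' x) x)
    {C C' : ℝ} (hu_bdd : ∀ x, |u x| ≤ C) (hu'_bdd : ∀ x, |u' x| ≤ C') :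
    ∫ x, x * u x * stdPdf x = ∫ x, u' x * stdPdf x := by
  have hu_meas : AEStronglyMeasurable u :=
    (continuous_iff_continuousAt.2 fun x => (hu x).continuousAt).aestronglyMeasurable
  have hu'_meas : AEStronglyMeasurable u' := by
    rw [show u' = deriv u from funext fun x => (hu x).deriv.symm]
    exact (measurable_deriv u).aestronglyMeasurable
  have hv : ∀ x, HasDerivAt (-stdPdf) (x * stdPdf x) x := fun x => by
    simpa using (hasDerivAt_stdPdf x).neg
  have parts := integral_mul_deriv_eq_deriv_mul_of_integrable (fun x _ => hu x)
    (fun x _ => hv x)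
    (integrable_id_mul_stdPdf.bdd_mul hu_meas (Filter.Eventually.of_forall hu_bdd))
    (integrable_stdPdf.neg.bdd_mul hu'_meas (Filter.Eventually.of_forall hu'_bdd))
    (integrable_stdPdf.neg.bdd_mul hu_meas (Filter.Eventually.of_forall hu_bdd))
  simp only [Pi.neg_apply, mul_neg, integral_neg, neg_neg] at parts
  simpa only [mul_left_comm, mul_assoc] using parts

theorem integral_stdPdf_mul_add (s t : ℝ) : ∫ x, stdPdf (s * x + t) = |s|⁻¹ := by
  rw [Measure.integral_comp_mul_left (fun y => stdPdf (y + t)), integral_add_right_eq_self,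
    integral_stdPdf, abs_inv, smul_eq_mul, mul_one]

-- Completing the square: `(a + b x)² + x² = (s x + a b / s)² + (a / s)²` with `s = √(1 + b²)`.
theorem stdPdf_add_mul_mul_stdPdf (a b x : ℝ) :
    stdPdf (a + b * x) * stdPdf x = stdPdf (a / √(1 + b ^ 2)) *
      stdPdf (√(1 + b ^ 2) * x + a * b / √(1 + b ^ 2)) := by
  have hs2 : √(1 + b ^ 2) ^ 2 = 1 + b ^ 2 := sq_sqrt (by positivity)
  simp only [stdPdf]
  rw [mul_mul_mul_comm, mul_mul_mul_comm _ (exp _), ← exp_add, ← exp_add]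
  congr 2
  field_simp
  rw [hs2]
  ring

theorem integral_stdPdf_add_mul_mul_stdPdf (a b : ℝ) :
    ∫ x, stdPdf (a + b * x) * stdPdf x = stdPdf (a / √(1 + b ^ 2)) / √(1 + b ^ 2) := by
  simp_rw [stdPdf_add_mul_mul_stdPdf, integral_const_mul, integral_stdPdf_mul_add,
    abs_of_pos (show 0 < √(1 + b ^ 2) by positivity), div_eq_mul_inv]

/-- Gaussian integral identity:
`∫ x Φ(a + bx) φ(x) dx = (b / √(1 + b²)) φ(a / √(1 + b²))`. -/
theorem integral_id_mul_cdf_mul_pdf (a b : ℝ) :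
    ∫ x : ℝ, x * stdCdf (a + b * x) * stdPdf x =
      (b / Real.sqrt (1 + b ^ 2)) * stdPdf (a / Real.sqrt (1 + b ^ 2)) := by
  have hderiv_bdd (x : ℝ) : |b * stdPdf (a + b * x)| ≤ |b| * stdPdf 0 := by
    rw [abs_mul, abs_of_nonneg (stdPdf_nonneg _)]
    exact mul_le_mul_of_nonneg_left (stdPdf_le_stdPdf_zero _) (abs_nonneg b)
  calc ∫ x, x * stdCdf (a + b * x) * stdPdf x
      = ∫ x, b * stdPdf (a + b * x) * stdPdf x :=
        integral_id_mul_mul_stdPdf (hasDerivAt_stdCdf_add_mul a b)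
          (fun x => abs_stdCdf_le_one _) hderiv_bdd
    _ = b * ∫ x, stdPdf (a + b * x) * stdPdf x := by
        simp_rw [mul_assoc, integral_const_mul]
    _ = b / √(1 + b ^ 2) * stdPdf (a / √(1 + b ^ 2)) := by
        rw [integral_stdPdf_add_mul_mul_stdPdf]
        ring
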